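/- Let A ∈ ℝ^{n×n}, B ∈ ℝ^{n×m}, let Q, Q_f, P ∈ ℝ^{n×n} be symmetric positive semidefinite and R ∈ ℝ^{m×m} symmetric positive semidefinite, suppose P satisfies the Bellman inequality for (A,B,Q,R), and suppose xᵀ Q_f x ≥ xᵀ P x for all x ∈ ℝⁿ. Let U_0,…,U_{N−1} ⊆ ℝᵐ and X_1,…,X_N ⊆ ℝⁿ be arbitrary sets, let w_1,…,w_S > 0 with Σ_s w_s = 1, and let disturbance sequences d^{(s)} satisfy Σ_{s=1}^S w_s d_{k,s} = 0 for every k. For each scenario s define 𝒱_N(x̂, d^{(s)}) as the infimum of Σ_{k=0}^{N−1}( x_kᵀ Q x_k + u_kᵀ R u_k ) + x_Nᵀ Q_f x_N over all trajectories with x_0 = x̂, x_{k+1} = A x_k + B u_k + d_{k,s}, u_k ∈ U_k, and x_k ∈ X_k for k = 1,…,N. If the feasible set of every scenario is nonempty, then x̂ᵀ P x̂ ≤ Σ_{s=1}^S w_s 𝒱_N(x̂, d^{(s)}). -/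

import Mathlib

open Matrix Finset

lemma quad_nonneg {n : ℕ} {M : Matrix (Fin n) (Fin n) ℝ} (hM : M.PosSemidef)
    (x : Fin n → ℝ) : 0 ≤ x ⬝ᵥ M.mulVec x := by
  have := hM.dotProduct_mulVec_nonneg x; simpa using this

lemma dot_symm {n : ℕ} {M : Matrix (Fin n) (Fin n) ℝ} (hM : M.PosSemidef)
    (a b : Fin n → ℝ) : a ⬝ᵥ M.mulVec b = b ⬝ᵥ M.mulVec a := by
  have hMt : Mᵀ = M := by
    have := hM.1
    simpa [Matrix.IsHermitian, Matrix.conjTranspose_eq_transpose_of_trivial] using this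
  rw [dotProduct_mulVec, ← Matrix.mulVec_transpose, hMt, dotProduct_comm]

lemma jensen_quad {n S : ℕ} {M : Matrix (Fin n) (Fin n) ℝ} (hM : M.PosSemidef)
    (w : Fin S → ℝ) (hw : ∀ s, 0 ≤ w s) (hw1 : ∑ s, w s = 1) (v : Fin S → Fin n → ℝ) :
    (∑ s, w s • v s) ⬝ᵥ M.mulVec (∑ s, w s • v s) ≤ ∑ s, w s * (v s ⬝ᵥ M.mulVec (v s)) := by
  set xb := ∑ s, w s • v s with hxb
  have hlin : ∀ y : Fin n → ℝ, ∑ s, w s * (v s ⬝ᵥ M.mulVec y) = xb ⬝ᵥ M.mulVec y := by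
    intro y
    rw [hxb]
    simp only [dotProduct, Finset.sum_apply, Pi.smul_apply, smul_eq_mul,
      Finset.sum_mul, Finset.mul_sum]
    rw [Finset.sum_comm]
    exact Finset.sum_congr rfl fun s _ => Finset.sum_congr rfl fun i _ => by ring
  have key : 0 ≤ ∑ s, w s * ((v s - xb) ⬝ᵥ M.mulVec (v s - xb)) :=
    Finset.sum_nonneg fun s _ => mul_nonneg (hw s) (quad_nonneg hM _)
  have expand : ∀ s, (v s - xb) ⬝ᵥ M.mulVec (v s - xb)
      = v s ⬝ᵥ M.mulVec (v s) - 2 * (v s ⬝ᵥ M.mulVec xb) + xb ⬝ᵥ M.mulVec xb := by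
    intro s
    rw [Matrix.mulVec_sub, dotProduct_sub, sub_dotProduct, sub_dotProduct,
      dot_symm hM xb (v s)]
    ring
  have hsum : ∑ s, w s * ((v s - xb) ⬝ᵥ M.mulVec (v s - xb))
      = ∑ s, w s * (v s ⬝ᵥ M.mulVec (v s)) - xb ⬝ᵥ M.mulVec xb := by
    calc ∑ s, w s * ((v s - xb) ⬝ᵥ M.mulVec (v s - xb))
        = ∑ s, (w s * (v s ⬝ᵥ M.mulVec (v s)) - 2 * (w s * (v s ⬝ᵥ M.mulVec xb))
            + w s * (xb ⬝ᵥ M.mulVec xb)) := by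
          refine Finset.sum_congr rfl fun s _ => ?_
          rw [expand s]; ring
      _ = ∑ s, w s * (v s ⬝ᵥ M.mulVec (v s)) - 2 * ∑ s, w s * (v s ⬝ᵥ M.mulVec xb)
            + (∑ s, w s) * (xb ⬝ᵥ M.mulVec xb) := by
          rw [Finset.sum_add_distrib, Finset.sum_sub_distrib, ← Finset.mul_sum,
            Finset.sum_mul]
      _ = ∑ s, w s * (v s ⬝ᵥ M.mulVec (v s)) - xb ⬝ᵥ M.mulVec xb := by
          rw [hlin, hw1]; ring
  linarith [key, hsum.symm ▸ key]

lemma telescope (g c : ℕ → ℝ) (N : ℕ) (h : ∀ k, k < N → g k ≤ c k + g (k + 1)) :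
    g 0 ≤ (∑ k ∈ Finset.range N, c k) + g N := by
  induction N with
  | zero => simp
  | succ N ih =>
      have h1 : g 0 ≤ (∑ k ∈ Finset.range N, c k) + g N :=
        ih fun k hk => h k (Nat.lt_succ_of_lt hk)
      have h2 := h N (Nat.lt_succ_self N)
      rw [Finset.sum_range_succ]
      linarith
def costSet {n m N : ℕ}
    (A : Matrix (Fin n) (Fin n) ℝ) (B : Matrix (Fin n) (Fin m) ℝ)
    (Q Qf : Matrix (Fin n) (Fin n) ℝ) (R : Matrix (Fin m) (Fin m) ℝ)
    (U : Fin N → Set (Fin m → ℝ)) (X : Fin N → Set (Fin n → ℝ))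
    (xhat : Fin n → ℝ) (d : Fin N → Fin n → ℝ) : Set ℝ :=
  {c : ℝ | ∃ (x : Fin (N + 1) → Fin n → ℝ) (u : Fin N → Fin m → ℝ),
    x 0 = xhat ∧
    (∀ k : Fin N, x k.succ = A.mulVec (x k.castSucc) + B.mulVec (u k) + d k) ∧
    (∀ k : Fin N, u k ∈ U k) ∧
    (∀ k : Fin N, x k.succ ∈ X k) ∧
    c = (∑ k : Fin N, (x k.castSucc ⬝ᵥ Q.mulVec (x k.castSucc) + u k ⬝ᵥ R.mulVec (u k))) +
          x (Fin.last N) ⬝ᵥ Qf.mulVec (x (Fin.last N))}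

lemma cost_nonneg {n m N : ℕ}
    {A : Matrix (Fin n) (Fin n) ℝ} {B : Matrix (Fin n) (Fin m) ℝ}
    {Q Qf : Matrix (Fin n) (Fin n) ℝ} {R : Matrix (Fin m) (Fin m) ℝ}
    (hQ : Q.PosSemidef) (hQf : Qf.PosSemidef) (hR : R.PosSemidef)
    {U : Fin N → Set (Fin m → ℝ)} {X : Fin N → Set (Fin n → ℝ)}
    {xhat : Fin n → ℝ} {d : Fin N → Fin n → ℝ} {c : ℝ}
    (hc : c ∈ costSet A B Q Qf R U X xhat d) : 0 ≤ c := by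
  obtain ⟨x, u, -, -, -, -, rfl⟩ := hc
  have h1 : 0 ≤ ∑ k : Fin N, (x k.castSucc ⬝ᵥ Q.mulVec (x k.castSucc) + u k ⬝ᵥ R.mulVec (u k)) :=
    Finset.sum_nonneg fun k _ => add_nonneg (quad_nonneg hQ _) (quad_nonneg hR _)
  exact add_nonneg h1 (quad_nonneg hQf _)

lemma key_bound {n m N S : ℕ}
    (A : Matrix (Fin n) (Fin n) ℝ) (B : Matrix (Fin n) (Fin m) ℝ)
    (Q Qf P : Matrix (Fin n) (Fin n) ℝ) (R : Matrix (Fin m) (Fin m) ℝ)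
    (hQ : Q.PosSemidef) (hQf : Qf.PosSemidef) (hP : P.PosSemidef) (hR : R.PosSemidef)
    (hBellman : ∀ (x : Fin n → ℝ) (u : Fin m → ℝ),
      x ⬝ᵥ P.mulVec x ≤ x ⬝ᵥ Q.mulVec x + u ⬝ᵥ R.mulVec u +
        (A.mulVec x + B.mulVec u) ⬝ᵥ P.mulVec (A.mulVec x + B.mulVec u))
    (hQfP : ∀ x : Fin n → ℝ, x ⬝ᵥ P.mulVec x ≤ x ⬝ᵥ Qf.mulVec x)
    (U : Fin N → Set (Fin m → ℝ)) (X : Fin N → Set (Fin n → ℝ))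
    (w : Fin S → ℝ) (hw : ∀ s, 0 ≤ w s) (hw1 : ∑ s, w s = 1)
    (d : Fin S → Fin N → Fin n → ℝ)
    (hd : ∀ k : Fin N, ∑ s, w s • d s k = 0)
    (xhat : Fin n → ℝ) (c : Fin S → ℝ)
    (hc : ∀ s, c s ∈ costSet A B Q Qf R U X xhat (d s)) :
    xhat ⬝ᵥ P.mulVec xhat ≤ ∑ s, w s * c s := by
  choose x u hx0 hdyn hU hX hcost using hc
  set xb : Fin (N + 1) → Fin n → ℝ := fun k => ∑ s, w s • x s k with hxbdef
  set ub : Fin N → Fin m → ℝ := fun k => ∑ s, w s • u s k with hubdef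
  have hxb0 : xb 0 = xhat := by
    simp only [hxbdef, hx0, ← Finset.sum_smul, hw1, one_smul]
  have hmulVecA : ∀ (k : Fin (N+1)), A.mulVec (xb k) = ∑ s, w s • A.mulVec (x s k) := by
    intro k
    simp only [hxbdef, ← Matrix.mulVecLin_apply, map_sum]
    exact Finset.sum_congr rfl fun s _ => A.mulVecLin.map_smul _ _
  have hmulVecB : ∀ (k : Fin N), B.mulVec (ub k) = ∑ s, w s • B.mulVec (u s k) := by
    intro k
    simp only [hubdef, ← Matrix.mulVecLin_apply, map_sum]
    exact Finset.sum_congr rfl fun s _ => B.mulVecLin.map_smul _ _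
  have hdynb : ∀ k : Fin N, xb k.succ = A.mulVec (xb k.castSucc) + B.mulVec (ub k) := by
    intro k
    have : xb k.succ = ∑ s, w s • (A.mulVec (x s k.castSucc) + B.mulVec (u s k) + d s k) := by
      simp only [hxbdef]
      exact Finset.sum_congr rfl fun s _ => by rw [hdyn s k]
    rw [this]
    simp only [smul_add, Finset.sum_add_distrib, hd k, add_zero,
      hmulVecA k.castSucc, hmulVecB k]
  -- telescoping
  set stage : Fin N → ℝ := fun k =>
    xb k.castSucc ⬝ᵥ Q.mulVec (xb k.castSucc) + ub k ⬝ᵥ R.mulVec (ub k) with hstage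
  have hbell : ∀ k : Fin N,
      xb k.castSucc ⬝ᵥ P.mulVec (xb k.castSucc) ≤ stage k + xb k.succ ⬝ᵥ P.mulVec (xb k.succ) := by
    intro k
    have := hBellman (xb k.castSucc) (ub k)
    rw [← hdynb k] at this
    simpa [hstage, add_assoc] using this
  set g : ℕ → ℝ := fun i => if h : i < N + 1 then xb ⟨i, h⟩ ⬝ᵥ P.mulVec (xb ⟨i, h⟩) else 0 with hg
  set c' : ℕ → ℝ := fun i => if h : i < N then stage ⟨i, h⟩ else 0 with hc'
  have htel : g 0 ≤ (∑ k ∈ Finset.range N, c' k) + g N := by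
    refine telescope g c' N fun k hk => ?_
    have hk1 : k < N + 1 := Nat.lt_succ_of_lt hk
    have hk2 : k + 1 < N + 1 := Nat.succ_lt_succ hk
    simp only [hg, hc', dif_pos hk1, dif_pos hk, dif_pos hk2]
    have e1 : (⟨k, hk1⟩ : Fin (N+1)) = (⟨k, hk⟩ : Fin N).castSucc := rfl
    have e2 : (⟨k + 1, hk2⟩ : Fin (N+1)) = (⟨k, hk⟩ : Fin N).succ := rfl
    rw [e1, e2]
    exact hbell ⟨k, hk⟩
  have hg0 : g 0 = xhat ⬝ᵥ P.mulVec xhat := by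
    simp only [hg, dif_pos (Nat.succ_pos N)]
    have : (⟨0, Nat.succ_pos N⟩ : Fin (N+1)) = 0 := rfl
    rw [this, hxb0]
  have hgN : g N = xb (Fin.last N) ⬝ᵥ P.mulVec (xb (Fin.last N)) := by
    simp only [hg, dif_pos (Nat.lt_succ_self N)]
    rfl
  have hsum : (∑ k ∈ Finset.range N, c' k) = ∑ k : Fin N, stage k := by
    rw [← Fin.sum_univ_eq_sum_range c' N]
    refine Finset.sum_congr rfl fun k _ => ?_
    simp only [hc', dif_pos k.isLt]
  -- combine
  have step1 : xhat ⬝ᵥ P.mulVec xhat ≤ (∑ k : Fin N, stage k) +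
      xb (Fin.last N) ⬝ᵥ P.mulVec (xb (Fin.last N)) := by
    rw [← hg0, ← hsum, ← hgN]; exact htel
  have step2 : xhat ⬝ᵥ P.mulVec xhat ≤ (∑ k : Fin N, stage k) +
      xb (Fin.last N) ⬝ᵥ Qf.mulVec (xb (Fin.last N)) :=
    step1.trans (by linarith [hQfP (xb (Fin.last N))])
  -- Jensen on each piece
  have hQj : ∀ k : Fin N, xb k.castSucc ⬝ᵥ Q.mulVec (xb k.castSucc) ≤
      ∑ s, w s * (x s k.castSucc ⬝ᵥ Q.mulVec (x s k.castSucc)) := fun k =>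
    jensen_quad hQ w hw hw1 (fun s => x s k.castSucc)
  have hRj : ∀ k : Fin N, ub k ⬝ᵥ R.mulVec (ub k) ≤
      ∑ s, w s * (u s k ⬝ᵥ R.mulVec (u s k)) := fun k =>
    jensen_quad hR w hw hw1 (fun s => u s k)
  have hQfj : xb (Fin.last N) ⬝ᵥ Qf.mulVec (xb (Fin.last N)) ≤
      ∑ s, w s * (x s (Fin.last N) ⬝ᵥ Qf.mulVec (x s (Fin.last N))) :=
    jensen_quad hQf w hw hw1 (fun s => x s (Fin.last N))
  have hstagele : ∑ k : Fin N, stage k ≤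
      ∑ k : Fin N, ∑ s, w s * (x s k.castSucc ⬝ᵥ Q.mulVec (x s k.castSucc)
        + u s k ⬝ᵥ R.mulVec (u s k)) := by
    refine Finset.sum_le_sum fun k _ => ?_
    have := add_le_add (hQj k) (hRj k)
    rw [← Finset.sum_add_distrib] at this
    refine le_trans this (le_of_eq (Finset.sum_congr rfl fun s _ => by ring))
  have hfinal : (∑ k : Fin N, ∑ s, w s * (x s k.castSucc ⬝ᵥ Q.mulVec (x s k.castSucc)
        + u s k ⬝ᵥ R.mulVec (u s k)))
      + ∑ s, w s * (x s (Fin.last N) ⬝ᵥ Qf.mulVec (x s (Fin.last N)))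
      = ∑ s, w s * c s := by
    rw [Finset.sum_comm, ← Finset.sum_add_distrib]
    refine Finset.sum_congr rfl fun s _ => ?_
    rw [hcost s, mul_add, Finset.mul_sum]
  calc xhat ⬝ᵥ P.mulVec xhat
      ≤ (∑ k : Fin N, stage k) + xb (Fin.last N) ⬝ᵥ Qf.mulVec (xb (Fin.last N)) := step2
    _ ≤ (∑ k : Fin N, ∑ s, w s * (x s k.castSucc ⬝ᵥ Q.mulVec (x s k.castSucc)
          + u s k ⬝ᵥ R.mulVec (u s k)))
        + ∑ s, w s * (x s (Fin.last N) ⬝ᵥ Qf.mulVec (x s (Fin.last N))) :=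
        add_le_add hstagele hQfj
    _ = ∑ s, w s * c s := hfinal
/-- paper's Theorem 1: the multistage LQR quadratic `x ↦ xᵀ P x` under-estimates
the weighted sum of the constrained scenario value functions `𝒱_N(xhat, d⁽ˢ⁾)` whenever each
scenario is feasible and the disturbances have zero weighted mean. -/
theorem lqr_quadratic_underestimates_multistage_value
    {n m N S : ℕ}
    (A : Matrix (Fin n) (Fin n) ℝ) (B : Matrix (Fin n) (Fin m) ℝ)
    (Q Qf P : Matrix (Fin n) (Fin n) ℝ) (R : Matrix (Fin m) (Fin m) ℝ)
    (hQ : Q.PosSemidef) (hQf : Qf.PosSemidef) (hP : P.PosSemidef) (hR : R.PosSemidef)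
    (hBellman : ∀ (x : Fin n → ℝ) (u : Fin m → ℝ),
      x ⬝ᵥ P.mulVec x ≤ x ⬝ᵥ Q.mulVec x + u ⬝ᵥ R.mulVec u +
        (A.mulVec x + B.mulVec u) ⬝ᵥ P.mulVec (A.mulVec x + B.mulVec u))
    (hQfP : ∀ x : Fin n → ℝ, x ⬝ᵥ P.mulVec x ≤ x ⬝ᵥ Qf.mulVec x)
    (U : Fin N → Set (Fin m → ℝ)) (X : Fin N → Set (Fin n → ℝ))
    (w : Fin S → ℝ) (hw : ∀ s, 0 < w s) (hw1 : ∑ s, w s = 1)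
    (d : Fin S → Fin N → Fin n → ℝ)
    (hd : ∀ k : Fin N, ∑ s, w s • d s k = 0)
    (xhat : Fin n → ℝ)
    (hfeas : ∀ s : Fin S, (costSet A B Q Qf R U X xhat (d s)).Nonempty) :
    xhat ⬝ᵥ P.mulVec xhat ≤ ∑ s, w s * sInf (costSet A B Q Qf R U X xhat (d s)) := by
  apply le_of_forall_pos_le_add
  intro eps heps
  choose c hcmem hclt using fun s => Real.lt_sInf_add_pos (hfeas s) heps
  have h1 : xhat ⬝ᵥ P.mulVec xhat ≤ ∑ s, w s * c s :=
    key_bound A B Q Qf P R hQ hQf hP hR hBellman hQfP U X w (fun s => (hw s).le) hw1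
      d hd xhat c hcmem
  have h2 : ∑ s, w s * c s ≤ ∑ s, w s * (sInf (costSet A B Q Qf R U X xhat (d s)) + eps) :=
    Finset.sum_le_sum fun s _ => mul_le_mul_of_nonneg_left (hclt s).le (hw s).le
  have h3 : ∑ s, w s * (sInf (costSet A B Q Qf R U X xhat (d s)) + eps)
      = (∑ s, w s * sInf (costSet A B Q Qf R U X xhat (d s))) + eps := by
    simp only [mul_add, Finset.sum_add_distrib, ← Finset.sum_mul, hw1, one_mul]
  linarith
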